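/- Change-of-measure bound on the type-II error: (Q_{M̃_k} × P_{Ỹ_kⁿ})(A_k) ≤ β_{k,n} · Δ_k^{−(k+1)}, and since P_{M̃_k Ỹ_kⁿ}(A_k) = 1, it follows that −(1/n)·log β_{k,n} ≤ (1/n)·D(P_{M̃_k Ỹ_kⁿ} ‖ Q_{M̃_k} × P_{Ỹ_kⁿ}) + δ_n', where δ_n' := 1/n − ((k+1)/n)·log Δ_k. -/

import Mathlib

open Filter

noncomputable section

/-- `p` is a probability mass function on the finite alphabet `α`. -/
def IsPMF {α : Type*} [Fintype α] (p : α → ℝ) : Prop :=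
  (∀ a, 0 ≤ p a) ∧ ∑ a, p a = 1

open Classical in
/-- Probability that the random variable `X` takes the value `a`, under the pmf `p`. -/
def probEq {Ω α : Type*} [Fintype Ω] (p : Ω → ℝ) (X : Ω → α) (a : α) : ℝ :=
  ∑ ω, if X ω = a then p ω else 0

/-- Shannon entropy (base 2) of the random variable `X` under the pmf `p`. -/
def entOf {Ω α : Type*} [Fintype Ω] (p : Ω → ℝ) (X : Ω → α) : ℝ :=
  -∑ ω, p ω * Real.logb 2 (probEq p X (X ω))

/-- Conditional Shannon entropy `H(X | Y)` under the pmf `p`. -/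
def condEntOf {Ω α β : Type*} [Fintype Ω] (p : Ω → ℝ) (X : Ω → α) (Y : Ω → β) : ℝ :=
  entOf p (fun ω => (X ω, Y ω)) - entOf p Y

/-- Mutual information `I(X ; Y)` under the pmf `p`. -/
def miOf {Ω α β : Type*} [Fintype Ω] (p : Ω → ℝ) (X : Ω → α) (Y : Ω → β) : ℝ :=
  entOf p X + entOf p Y - entOf p (fun ω => (X ω, Y ω))

/-- Conditional mutual information `I(X ; Y | Z)` under the pmf `p`. -/
def condMIOf {Ω α β γ : Type*} [Fintype Ω] (p : Ω → ℝ) (X : Ω → α) (Y : Ω → β)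
    (Z : Ω → γ) : ℝ :=
  condEntOf p X Z + condEntOf p Y Z - condEntOf p (fun ω => (X ω, Y ω)) Z

open Classical in
/-- Probability of the set `S` under the pmf `p`. -/
def probSet {Ω : Type*} [Fintype Ω] (p : Ω → ℝ) (S : Set Ω) : ℝ :=
  ∑ ω, if ω ∈ S then p ω else 0

open Classical in
/-- Number of occurrences of the symbol `a` in the sequence `w`. -/
def Ncount {W : Type*} {n : ℕ} (w : Fin n → W) (a : W) : ℕ :=
  (Finset.univ.filter (fun i => w i = a)).card

/-- The strongly typical set `T_μ⁽ⁿ⁾(P)`. -/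
def typicalSet {W : Type*} [Fintype W] (P : W → ℝ) (μ : ℝ) (n : ℕ) : Set (Fin n → W) :=
  {w | ∀ a, |((Ncount w a : ℝ)) / n - P a| ≤ μ ∧ (P a = 0 → Ncount w a = 0)}

/-- The typicality parameter `μ_n = n^{-1/3}`. -/
def μseq (n : ℕ) : ℝ := (n : ℝ) ^ (-(1/3 : ℝ))

section KHop

variable (k : ℕ) (Y : ℕ → Type) [∀ i, Fintype (Y i)] [∀ i, Nonempty (Y i)]

/-- The index `j` viewed as an element of `Fin (k+1)`. -/
def idxLo (j : Fin k) : Fin (k + 1) := ⟨(j : ℕ), Nat.lt_succ_of_lt j.isLt⟩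

/-- The index `j+1` viewed as an element of `Fin (k+1)`. -/
def idxHi (j : Fin k) : Fin (k + 1) := ⟨(j : ℕ) + 1, Nat.succ_lt_succ j.isLt⟩

variable (P : (∀ i : Fin (k + 1), Y i) → ℝ)

/-- The i.i.d. law of the source tuple `(Y₀ⁿ,…,Y_kⁿ)` under hypothesis `H = 0`. -/
def iidK (n : ℕ) (ys : ∀ i : Fin (k + 1), Fin n → Y i) : ℝ :=
  ∏ t : Fin n, P (fun i => ys i t)

open Classical in
/-- The marginal pmf of `Y_i` under `P`. -/
def margK (i : Fin (k + 1)) (c : Y i) : ℝ :=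
  ∑ y : ∀ i : Fin (k + 1), Y i, if y i = c then P y else 0

/-- The product of the marginals `P_{Y₀}·P_{Y₁}⋯P_{Y_k}`. -/
def prodMargK (y : ∀ i : Fin (k + 1), Y i) : ℝ := ∏ i, margK k Y P i (y i)

/-- The i.i.d. law of the source tuple under hypothesis `H = 1` (product of marginals). -/
def iidQK (n : ℕ) (ys : ∀ i : Fin (k + 1), Fin n → Y i) : ℝ :=
  ∏ t : Fin n, prodMargK k Y P (fun i => ys i t)

open Classical in
/-- The pairwise marginal `P_{Y_j Y_{j+1}}` of `P`. -/
def pairMargK (j : Fin k) (a : Y (j : ℕ)) (b : Y ((j : ℕ) + 1)) : ℝ :=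
  ∑ y : ∀ i : Fin (k + 1), Y i, if y (idxLo k j) = a ∧ y (idxHi k j) = b then P y else 0

open Classical in
/-- `P` forms the Markov chain `Y₀ → Y₁ → ⋯ → Y_k`. -/
def IsMarkovChainK : Prop :=
  ∀ y : ∀ i : Fin (k + 1), Y i,
    P y * ∏ i ∈ Finset.univ.filter (fun i : Fin (k + 1) => 0 < (i : ℕ) ∧ (i : ℕ) < k),
        margK k Y P i (y i)
      = ∏ j : Fin k, pairMargK k Y P j (y (idxLo k j)) (y (idxHi k j))

/-- Extension of a source tuple to all natural indices (junk beyond `k`). -/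
def extendTup (n : ℕ) (ys : ∀ i : Fin (k + 1), Fin n → Y i) (ℓ : ℕ) : Fin n → Y ℓ :=
  if h : ℓ < k + 1 then ys ⟨ℓ, h⟩ else fun _ => Classical.arbitrary (Y ℓ)

/-- The messages computed recursively from the encoders:
`msgRec φ ys' ℓ` is the message `M_{ℓ+1}`. -/
def msgRec (n : ℕ) (φ : ∀ ℓ : ℕ, (Fin n → Y ℓ) → ℕ → ℕ)
    (ys' : ∀ ℓ : ℕ, Fin n → Y ℓ) : ℕ → ℕ
  | 0 => φ 0 (ys' 0) 0
  | (ℓ + 1) => φ (ℓ + 1) (ys' (ℓ + 1)) (msgRec n φ ys' ℓ)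

/-- A source tuple viewed as one sequence over the product alphabet. -/
def tupleSeq {n : ℕ} (ys : ∀ i : Fin (k + 1), Fin n → Y i) :
    Fin n → (∀ i : Fin (k + 1), Y i) :=
  fun t i => ys i t

/-- The acceptance region `A_k` of the decision center `R_k`: the tuples on which the
guess is `Ĥ_k = 0` (decision `false`). -/
def acceptSet (n : ℕ) (φ : ∀ ℓ : ℕ, (Fin n → Y ℓ) → ℕ → ℕ)
    (g : (Fin n → Y k) → ℕ → Bool) : Set (∀ i : Fin (k + 1), Fin n → Y i) :=
  {ys | g (extendTup k Y n ys k) (msgRec Y n φ (extendTup k Y n ys) (k - 1)) = false}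

/-- The set `D_k`: the acceptance region intersected with the strongly typical set. -/
def DsetCM (n : ℕ) (φ : ∀ ℓ : ℕ, (Fin n → Y ℓ) → ℕ → ℕ)
    (g : (Fin n → Y k) → ℕ → Bool) : Set (∀ i : Fin (k + 1), Fin n → Y i) :=
  acceptSet k Y n φ g ∩ {ys | tupleSeq k Y ys ∈ typicalSet P (μseq n) n}

/-- `Δ_k = Pr[(Y₀ⁿ,…,Y_kⁿ) ∈ D_k]` under `H = 0`. -/
def DeltaCM (n : ℕ) (φ : ∀ ℓ : ℕ, (Fin n → Y ℓ) → ℕ → ℕ)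
    (g : (Fin n → Y k) → ℕ → Bool) : ℝ :=
  probSet (iidK k Y P n) (DsetCM k Y P n φ g)

open Classical in
/-- The change-of-measure pmf of `(Ỹ₀ⁿ,…,Ỹ_kⁿ)`: the `H = 0` law conditioned on `D_k`. -/
def ptildeCM (n : ℕ) (φ : ∀ ℓ : ℕ, (Fin n → Y ℓ) → ℕ → ℕ)
    (g : (Fin n → Y k) → ℕ → Bool) (ys : ∀ i : Fin (k + 1), Fin n → Y i) : ℝ :=
  if ys ∈ DsetCM k Y P n φ g then iidK k Y P n ys / DeltaCM k Y P n φ g else 0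

/-- The pmf of `((Ỹ₀ⁿ,…,Ỹ_kⁿ), T)` with `T` uniform on `{1,…,n}` independent of the rest. -/
def pfullCM (n : ℕ) (φ : ∀ ℓ : ℕ, (Fin n → Y ℓ) → ℕ → ℕ)
    (g : (Fin n → Y k) → ℕ → Bool)
    (ω : (∀ i : Fin (k + 1), Fin n → Y i) × Fin n) : ℝ :=
  ptildeCM k Y P n φ g ω.1 / n

/-- The random variable `M̃_{j+1}` (the message of hop `j+1` applied to the tilde sources). -/
def MtilRV (n : ℕ) (φ : ∀ ℓ : ℕ, (Fin n → Y ℓ) → ℕ → ℕ) (j : ℕ)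
    (ω : (∀ i : Fin (k + 1), Fin n → Y i) × Fin n) : ℕ :=
  msgRec Y n φ (extendTup k Y n ω.1) j

open Classical in
/-- The prefixes `(Ỹ₀^{T−1},…,Ỹ_k^{T−1})` as a random variable. -/
def prefixAll (n : ℕ) (ω : (∀ i : Fin (k + 1), Fin n → Y i) × Fin n) :
    ∀ i : Fin (k + 1), Fin n → Option (Y i) :=
  fun i t => if (t : ℕ) < (ω.2 : ℕ) then some (ω.1 i t) else none

/-- The auxiliary random variable `U_{j+1} := (M̃_{j+1}, Ỹ₀^{T−1},…,Ỹ_k^{T−1}, T)`. -/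
def UvarCM (n : ℕ) (φ : ∀ ℓ : ℕ, (Fin n → Y ℓ) → ℕ → ℕ) (j : ℕ)
    (ω : (∀ i : Fin (k + 1), Fin n → Y i) × Fin n) :
    ℕ × (∀ i : Fin (k + 1), Fin n → Option (Y i)) × Fin n :=
  (MtilRV k Y n φ j ω, prefixAll k Y n ω, ω.2)

/-- The type-I error probability `α_{k,n} = Pr[Ĥ_k = 1 | H = 0]`. -/
def alphaCM (n : ℕ) (φ : ∀ ℓ : ℕ, (Fin n → Y ℓ) → ℕ → ℕ)
    (g : (Fin n → Y k) → ℕ → Bool) : ℝ :=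
  probSet (iidK k Y P n) ((acceptSet k Y n φ g)ᶜ)

/-- The type-II error probability `β_{k,n} = Pr[Ĥ_k = 0 | H = 1]`. -/
def betaCM (n : ℕ) (φ : ∀ ℓ : ℕ, (Fin n → Y ℓ) → ℕ → ℕ)
    (g : (Fin n → Y k) → ℕ → Bool) : ℝ :=
  probSet (iidQK k Y P n) (acceptSet k Y n φ g)

end KHop

section KHopQ

variable (k : ℕ) (Y : ℕ → Type) [∀ i, Fintype (Y i)] [∀ i, Nonempty (Y i)]
variable (P : (∀ i : Fin (k + 1), Y i) → ℝ)

/-- Extension of a partial source tuple `(y₀ⁿ,…,y_{k−1}ⁿ)` to all natural indices. -/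
def partialExt (n : ℕ) (pys : ∀ j : Fin k, Fin n → Y (j : ℕ)) (ℓ : ℕ) : Fin n → Y ℓ :=
  if h : ℓ < k then pys ⟨ℓ, h⟩ else fun _ => Classical.arbitrary (Y ℓ)

/-- The marginal law of the tilde sequence `Ỹ_iⁿ` (component `i` of the tilde tuple). -/
def margSeqT (n : ℕ) (φ : ∀ ℓ : ℕ, (Fin n → Y ℓ) → ℕ → ℕ)
    (g : (Fin n → Y k) → ℕ → Bool) (i : Fin (k + 1)) (s : Fin n → Y i) : ℝ :=
  probEq (ptildeCM k Y P n φ g) (fun ys => ys i) s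

open Classical in
/-- `Q_{M̃_k}`: the pmf of the message `m_k` obtained by applying the encoders to
independent inputs with the marginal distributions `P_{Ỹ₀ⁿ},…,P_{Ỹ_{k−1}ⁿ}`. -/
def QmsgCM (n : ℕ) (φ : ∀ ℓ : ℕ, (Fin n → Y ℓ) → ℕ → ℕ)
    (g : (Fin n → Y k) → ℕ → Bool) (m : ℕ) : ℝ :=
  ∑ pys : ∀ j : Fin k, Fin n → Y (j : ℕ),
    (∏ j : Fin k, margSeqT k Y P n φ g (idxLo k j) (pys j)) *
      (if msgRec Y n φ (partialExt k Y n pys) (k - 1) = m then 1 else 0)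

open Classical in
/-- `(Q_{M̃_k} × P_{Ỹ_kⁿ})(A_k)`: the probability under the product of `Q_{M̃_k}` and the
tilde marginal of `Ỹ_kⁿ` of the acceptance event `g_k(m_k, y_kⁿ) = 0`. -/
def QPaccCM (n : ℕ) (φ : ∀ ℓ : ℕ, (Fin n → Y ℓ) → ℕ → ℕ)
    (g : (Fin n → Y k) → ℕ → Bool) : ℝ :=
  ∑ pys : ∀ j : Fin k, Fin n → Y (j : ℕ), ∑ yk : Fin n → Y k,
    (∏ j : Fin k, margSeqT k Y P n φ g (idxLo k j) (pys j)) *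
      margSeqT k Y P n φ g (Fin.last k) yk *
      (if g yk (msgRec Y n φ (partialExt k Y n pys) (k - 1)) = false then 1 else 0)

/-- The pair `(M̃_k, Ỹ_kⁿ)` as a random variable of the tilde source tuple. -/
def MYpairCM (n : ℕ) (φ : ∀ ℓ : ℕ, (Fin n → Y ℓ) → ℕ → ℕ)
    (ys : ∀ i : Fin (k + 1), Fin n → Y i) : ℕ × (Fin n → Y k) :=
  (msgRec Y n φ (extendTup k Y n ys) (k - 1), extendTup k Y n ys k)

/-- The KL divergence `D(P_{M̃_k Ỹ_kⁿ} ‖ Q_{M̃_k} × P_{Ỹ_kⁿ})`. -/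
def klJointCM (n : ℕ) (φ : ∀ ℓ : ℕ, (Fin n → Y ℓ) → ℕ → ℕ)
    (g : (Fin n → Y k) → ℕ → Bool) : ℝ :=
  ∑ ys : ∀ i : Fin (k + 1), Fin n → Y i,
    ptildeCM k Y P n φ g ys *
      Real.logb 2
        (probEq (ptildeCM k Y P n φ g) (MYpairCM k Y n φ) (MYpairCM k Y n φ ys)
          / (QmsgCM k Y P n φ g (MYpairCM k Y n φ ys).1 *
              margSeqT k Y P n φ g (Fin.last k) (MYpairCM k Y n φ ys).2))

end KHopQ

/-!
Conditioning the `H = 0` law on `D_k` multiplies probabilities by at most `1 / Δ_k`, so each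
conditioned marginal `P_{Ỹ_iⁿ}` is at most `P_{Y_i}^{⊗n} / Δ_k`. The measure
`Q_{M̃_k} × P_{Ỹ_kⁿ}` is the image of the product of the `k + 1` conditioned marginals under
`ys ↦ (m_k, y_kⁿ)`, hence its mass on `A_k` is at most `β_{k,n} / Δ_k^{k+1}`, the `H = 1` law
being the product of the unconditioned marginals. The law of `(M̃_k, Ỹ_kⁿ)` is carried by `A_k`,
so by Jensen's inequality for `log` (Gibbs) its divergence from `Q_{M̃_k} × P_{Ỹ_kⁿ}` is at least
`-log (Q_{M̃_k} × P_{Ỹ_kⁿ})(A_k) ≥ -log β_{k,n} + (k + 1) log Δ_k`.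
-/

open Finset

section Pmf

variable {Ω α : Type*} [Fintype Ω] {p q : Ω → ℝ}

lemma probEq_nonneg (hp : ∀ ω, 0 ≤ p ω) (X : Ω → α) (a : α) : 0 ≤ probEq p X a :=
  sum_nonneg fun ω _ => by split_ifs <;> simp [hp ω]

lemma le_probEq (hp : ∀ ω, 0 ≤ p ω) (X : Ω → α) (ω : Ω) : p ω ≤ probEq p X (X ω) := by
  classical
  simpa [probEq] using single_le_sum (f := fun ω' => if X ω' = X ω then p ω' else 0)
    (fun ω' _ => by split_ifs <;> simp [hp ω']) (mem_univ ω)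

lemma exists_pos_of_probEq_pos {X : Ω → α} {a : α} (h : 0 < probEq p X a) :
    ∃ ω, 0 < p ω ∧ X ω = a := by
  obtain ⟨ω, -, hω⟩ := exists_lt_of_sum_lt (s := univ) (f := fun _ => (0 : ℝ))
    (by simpa [probEq] using h)
  by_cases hX : X ω = a
  · exact ⟨ω, by simpa [hX] using hω, hX⟩
  · simp [hX] at hω

lemma sum_mul_comp_eq_sum_probEq [DecidableEq α] (p : Ω → ℝ) (X : Ω → α) (f : α → ℝ) :
    ∑ ω, p ω * f (X ω) = ∑ a ∈ univ.image X, probEq p X a * f a := by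
  rw [← sum_fiberwise_of_maps_to (fun ω _ => mem_image_of_mem X (mem_univ ω))]
  refine sum_congr rfl fun a _ => ?_
  simp_rw [probEq, sum_mul, ite_mul, zero_mul]
  rw [← sum_filter]
  exact sum_congr rfl fun ω hω => by rw [(mem_filter.mp hω).2]

lemma sum_probEq_eq_probSet_preimage (p : Ω → ℝ) (X : Ω → α) (F : Finset α) :
    ∑ a ∈ F, probEq p X a = probSet p (X ⁻¹' F) := by
  classical
  simp only [probEq, probSet]
  rw [sum_comm]
  refine sum_congr rfl fun ω _ => ?_
  rw [sum_ite_eq]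
  congr 1

lemma probSet_nonneg (hp : ∀ ω, 0 ≤ p ω) (S : Set Ω) : 0 ≤ probSet p S :=
  sum_nonneg fun ω _ => by split_ifs <;> simp [hp ω]

lemma le_probSet (hp : ∀ ω, 0 ≤ p ω) {S : Set Ω} {ω : Ω} (hω : ω ∈ S) : p ω ≤ probSet p S := by
  classical
  simpa [probSet, hω] using single_le_sum (f := fun ω' => if ω' ∈ S then p ω' else 0)
    (fun ω' _ => by split_ifs <;> simp [hp ω']) (mem_univ ω)

lemma probSet_mono (hp : ∀ ω, 0 ≤ p ω) {S T : Set Ω} (hST : S ⊆ T) :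
    probSet p S ≤ probSet p T := by
  refine sum_le_sum fun ω _ => ?_
  by_cases hS : ω ∈ S
  · simp [hS, hST hS]
  · by_cases hT : ω ∈ T <;> simp [hS, hT, hp ω]

lemma probSet_le_probSet {S : Set Ω} (h : ∀ ω ∈ S, p ω ≤ q ω) :
    probSet p S ≤ probSet q S := by
  refine sum_le_sum fun ω _ => ?_
  split_ifs with hω
  exacts [h ω hω, le_rfl]

lemma probSet_div (p : Ω → ℝ) (S : Set Ω) (c : ℝ) :
    probSet (fun ω => p ω / c) S = probSet p S / c := by
  rw [probSet, probSet, sum_div]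
  exact sum_congr rfl fun ω _ => by split_ifs <;> simp

end Pmf

lemma neg_logb_le_sum_mul_logb_div {ι : Type*} {b Q : ℝ} (hb : 1 < b) {s : Finset ι}
    {p q : ι → ℝ} (hp : ∀ z ∈ s, 0 ≤ p z) (hp1 : ∑ z ∈ s, p z = 1)
    (hq : ∀ z ∈ s, 0 < p z → 0 < q z) (hQ : ∑ z ∈ s with 0 < p z, q z ≤ Q) :
    -Real.logb b Q ≤ ∑ z ∈ s, p z * Real.logb b (p z / q z) := by
  set t := s.filter (fun z => 0 < p z)
  have ht : ∀ z ∈ t, 0 < p z ∧ 0 < q z := fun z hz =>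
    have hz := mem_filter.mp hz
    ⟨hz.2, hq z hz.1 hz.2⟩
  have hsupp : ∀ z ∈ s, p z ≠ 0 → 0 < p z := fun z hz h => (hp z hz).lt_of_ne' h
  have hpt : ∑ z ∈ t, p z = 1 := by rwa [sum_filter_of_ne hsupp]
  have hqt : 0 < ∑ z ∈ t, q z := by
    obtain ⟨z, hz⟩ : t.Nonempty := nonempty_of_sum_ne_zero (by rw [hpt]; exact one_ne_zero)
    exact sum_pos (fun z hz => (ht z hz).2) ⟨z, hz⟩
  have hjensen : ∑ z ∈ t, p z • Real.log (q z / p z) ≤ Real.log (∑ z ∈ t, p z • (q z / p z)) :=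
    strictConcaveOn_log_Ioi.concaveOn.le_map_sum (fun z hz => (ht z hz).1.le) hpt
      fun z hz => div_pos (ht z hz).2 (ht z hz).1
  have hcancel : ∑ z ∈ t, p z • (q z / p z) = ∑ z ∈ t, q z :=
    sum_congr rfl fun z hz => by rw [smul_eq_mul, mul_div_cancel₀ _ (ht z hz).1.ne']
  have hlog : -Real.log Q ≤ ∑ z ∈ t, p z * Real.log (p z / q z) := by
    have hmono := Real.log_le_log hqt hQ
    have hflip : ∑ z ∈ t, p z * Real.log (p z / q z) = -∑ z ∈ t, p z • Real.log (q z / p z) := by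
      rw [← sum_neg_distrib]
      exact sum_congr rfl fun z _ => by rw [smul_eq_mul, ← mul_neg, ← Real.log_inv, inv_div]
    rw [hcancel] at hjensen
    linarith
  rw [← sum_filter_of_ne fun z hz h => hsupp z hz (left_ne_zero_of_mul h)]
  simp only [Real.logb, ← mul_div_assoc, ← sum_div, ← neg_div]
  exact div_le_div_of_nonneg_right hlog (Real.log_pos hb).le

section KHopLemmas

variable {k : ℕ} {Y : ℕ → Type} {P : (∀ i : Fin (k + 1), Y i) → ℝ} {n : ℕ}

lemma iidK_nonneg (hP : ∀ y, 0 ≤ P y) (ys : ∀ i : Fin (k + 1), Fin n → Y i) :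
    0 ≤ iidK k Y P n ys :=
  prod_nonneg fun _ _ => hP _

lemma msgRec_congr {φ : ∀ ℓ : ℕ, (Fin n → Y ℓ) → ℕ → ℕ} {ys zs : ∀ ℓ : ℕ, Fin n → Y ℓ} :
    ∀ j, (∀ ℓ ≤ j, ys ℓ = zs ℓ) → msgRec Y n φ ys j = msgRec Y n φ zs j
  | 0, h => by simp only [msgRec, h 0 le_rfl]
  | j + 1, h => by
    simp only [msgRec, h (j + 1) le_rfl, msgRec_congr j fun ℓ hℓ => h ℓ (hℓ.trans j.le_succ)]

section Messages

variable [∀ i, Nonempty (Y i)] {φ : ∀ ℓ : ℕ, (Fin n → Y ℓ) → ℕ → ℕ}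

lemma extendTup_last (ys : ∀ i : Fin (k + 1), Fin n → Y i) :
    extendTup k Y n ys k = ys (Fin.last k) :=
  dif_pos k.lt_succ_self

lemma MYpairCM_snoc (hk : 1 ≤ k) (pys : ∀ j : Fin k, Fin n → Y j) (yk : Fin n → Y k) :
    MYpairCM k Y n φ (Fin.snoc (α := fun i : Fin (k + 1) => Fin n → Y i) pys yk)
      = (msgRec Y n φ (partialExt k Y n pys) (k - 1), yk) := by
  refine Prod.ext (msgRec_congr (k - 1) fun ℓ hℓ => ?_)
    ((extendTup_last _).trans (Fin.snoc_last _ _))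
  have hℓk : ℓ < k := by omega
  simp only [extendTup, partialExt, Nat.lt_succ_of_lt hℓk, hℓk, ↓reduceDIte]
  exact Fin.snoc_castSucc (i := ⟨ℓ, hℓk⟩) ..

end Messages

section Marginals

variable [∀ i, Fintype (Y i)]

lemma probEq_iidK (i : Fin (k + 1)) (s : Fin n → Y i) :
    probEq (iidK k Y P n) (fun ys => ys i) s = ∏ t, margK k Y P i (s t) := by
  classical
  simp only [margK, Fintype.prod_sum, Fintype.prod_ite_zero]
  refine Fintype.sum_equiv (Equiv.piComm fun (i : Fin (k + 1)) (_ : Fin n) => Y i) _ _ fun ys => ?_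
  simp only [Equiv.piComm_apply, ← funext_iff, iidK, Function.swap]
  congr 1

lemma iidQK_eq_prod_probEq_iidK (ys : ∀ i : Fin (k + 1), Fin n → Y i) :
    iidQK k Y P n ys = ∏ i, probEq (iidK k Y P n) (fun ys => ys i) (ys i) := by
  simp only [probEq_iidK, iidQK, prodMargK]
  exact prod_comm

end Marginals

variable [∀ i, Fintype (Y i)] [∀ i, Nonempty (Y i)] {φ : ∀ ℓ : ℕ, (Fin n → Y ℓ) → ℕ → ℕ}
  {g : (Fin n → Y k) → ℕ → Bool}

lemma DeltaCM_nonneg (hP : ∀ y, 0 ≤ P y) : 0 ≤ DeltaCM k Y P n φ g :=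
  probSet_nonneg (iidK_nonneg hP) _

lemma ptildeCM_nonneg (hP : ∀ y, 0 ≤ P y) (ys : ∀ i : Fin (k + 1), Fin n → Y i) :
    0 ≤ ptildeCM k Y P n φ g ys := by
  unfold ptildeCM
  split_ifs
  exacts [div_nonneg (iidK_nonneg hP ys) (DeltaCM_nonneg hP), le_rfl]

lemma ptildeCM_le_div (hP : ∀ y, 0 ≤ P y) (ys : ∀ i : Fin (k + 1), Fin n → Y i) :
    ptildeCM k Y P n φ g ys ≤ iidK k Y P n ys / DeltaCM k Y P n φ g := by
  unfold ptildeCM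
  split_ifs
  exacts [le_rfl, div_nonneg (iidK_nonneg hP ys) (DeltaCM_nonneg hP)]

lemma mem_DsetCM_of_ptildeCM_pos {ys : ∀ i : Fin (k + 1), Fin n → Y i}
    (h : 0 < ptildeCM k Y P n φ g ys) : ys ∈ DsetCM k Y P n φ g := by
  by_contra hys
  simp [ptildeCM, hys] at h

lemma sum_ptildeCM (hΔ : 0 < DeltaCM k Y P n φ g) : ∑ ys, ptildeCM k Y P n φ g ys = 1 := by
  calc ∑ ys, ptildeCM k Y P n φ g ys
      = probSet (iidK k Y P n) (DsetCM k Y P n φ g) / DeltaCM k Y P n φ g := by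
        rw [probSet, sum_div]
        exact sum_congr rfl fun ys _ => by unfold ptildeCM; split_ifs <;> simp
    _ = 1 := div_self hΔ.ne'

lemma margSeqT_nonneg (hP : ∀ y, 0 ≤ P y) (i : Fin (k + 1)) (s : Fin n → Y i) :
    0 ≤ margSeqT k Y P n φ g i s :=
  probEq_nonneg (ptildeCM_nonneg hP) _ _

lemma ptildeCM_le_margSeqT (hP : ∀ y, 0 ≤ P y) (ys : ∀ i : Fin (k + 1), Fin n → Y i)
    (i : Fin (k + 1)) : ptildeCM k Y P n φ g ys ≤ margSeqT k Y P n φ g i (ys i) :=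
  le_probEq (ptildeCM_nonneg hP) (fun ys => ys i) ys

lemma margSeqT_le_div (hP : ∀ y, 0 ≤ P y) (i : Fin (k + 1)) (s : Fin n → Y i) :
    margSeqT k Y P n φ g i s
      ≤ probEq (iidK k Y P n) (fun ys => ys i) s / DeltaCM k Y P n φ g := by
  unfold margSeqT probEq
  rw [sum_div]
  refine sum_le_sum fun ys _ => ?_
  split_ifs
  exacts [ptildeCM_le_div hP ys, by simp]

variable (k Y P n φ g) in
def margProdCM (ys : ∀ i : Fin (k + 1), Fin n → Y i) : ℝ :=
  ∏ i, margSeqT k Y P n φ g i (ys i)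

lemma margProdCM_nonneg (hP : ∀ y, 0 ≤ P y) (ys : ∀ i : Fin (k + 1), Fin n → Y i) :
    0 ≤ margProdCM k Y P n φ g ys :=
  prod_nonneg fun i _ => margSeqT_nonneg hP i _

lemma margProdCM_le_iidQK_div (hP : ∀ y, 0 ≤ P y) (ys : ∀ i : Fin (k + 1), Fin n → Y i) :
    margProdCM k Y P n φ g ys ≤ iidQK k Y P n ys / DeltaCM k Y P n φ g ^ (k + 1) := by
  calc margProdCM k Y P n φ g ys
      ≤ ∏ i, probEq (iidK k Y P n) (fun ys => ys i) (ys i) / DeltaCM k Y P n φ g :=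
        prod_le_prod (fun i _ => margSeqT_nonneg hP i _) fun i _ => margSeqT_le_div hP i _
    _ = iidQK k Y P n ys / DeltaCM k Y P n φ g ^ (k + 1) := by
        rw [prod_div_distrib, prod_const, card_univ, Fintype.card_fin,
          iidQK_eq_prod_probEq_iidK]

lemma margProdCM_pos_of_ptildeCM_pos (hP : ∀ y, 0 ≤ P y) {ys : ∀ i : Fin (k + 1), Fin n → Y i}
    (h : 0 < ptildeCM k Y P n φ g ys) : 0 < margProdCM k Y P n φ g ys :=
  prod_pos fun i _ => h.trans_le (ptildeCM_le_margSeqT hP ys i)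

lemma sum_margProdCM_mul_comp_MYpairCM (hk : 1 ≤ k) (F : ℕ × (Fin n → Y k) → ℝ) :
    ∑ ys, margProdCM k Y P n φ g ys * F (MYpairCM k Y n φ ys)
      = ∑ pys : ∀ j : Fin k, Fin n → Y j, ∑ yk : Fin n → Y k,
          (∏ j : Fin k, margSeqT k Y P n φ g (idxLo k j) (pys j)) *
            margSeqT k Y P n φ g (Fin.last k) yk *
            F (msgRec Y n φ (partialExt k Y n pys) (k - 1), yk) := by
  rw [← (Fin.snocEquiv fun i : Fin (k + 1) => Fin n → Y i).sum_comp, Fintype.sum_prod_type,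
    sum_comm]
  refine sum_congr rfl fun pys _ => sum_congr rfl fun yk _ => ?_
  change margProdCM k Y P n φ g (Fin.snoc pys yk) * F (MYpairCM k Y n φ (Fin.snoc pys yk)) = _
  rw [MYpairCM_snoc hk, margProdCM, Fin.prod_univ_castSucc]
  simp only [Fin.snoc_castSucc, Fin.snoc_last]
  rfl

lemma QPaccCM_eq_probSet (hk : 1 ≤ k) :
    QPaccCM k Y P n φ g = probSet (margProdCM k Y P n φ g) (acceptSet k Y n φ g) := by
  calc QPaccCM k Y P n φ g
      = ∑ ys, margProdCM k Y P n φ g ys *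
          if g (MYpairCM k Y n φ ys).2 (MYpairCM k Y n φ ys).1 = false then 1 else 0 :=
        (sum_margProdCM_mul_comp_MYpairCM hk fun z => if g z.2 z.1 = false then 1 else 0).symm
    _ = probSet (margProdCM k Y P n φ g) (acceptSet k Y n φ g) :=
        sum_congr rfl fun ys _ => by rw [mul_ite, mul_one, mul_zero]; congr 1

lemma QmsgCM_mul_margSeqT_eq_probEq (hk : 1 ≤ k) (m : ℕ) (yk : Fin n → Y k) :
    QmsgCM k Y P n φ g m * margSeqT k Y P n φ g (Fin.last k) yk
      = probEq (margProdCM k Y P n φ g) (MYpairCM k Y n φ) (m, yk) := by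
  classical
  calc QmsgCM k Y P n φ g m * margSeqT k Y P n φ g (Fin.last k) yk
      = ∑ pys : ∀ j : Fin k, Fin n → Y j, ∑ yk' : Fin n → Y k,
          (∏ j : Fin k, margSeqT k Y P n φ g (idxLo k j) (pys j)) *
            margSeqT k Y P n φ g (Fin.last k) yk' *
            if (msgRec Y n φ (partialExt k Y n pys) (k - 1), yk') = (m, yk) then 1 else 0 := by
        rw [QmsgCM, sum_mul]
        refine sum_congr rfl fun pys _ => ?_
        simp [Prod.ext_iff, ite_and]
    _ = ∑ ys, margProdCM k Y P n φ g ys * if MYpairCM k Y n φ ys = (m, yk) then 1 else 0 :=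
        (sum_margProdCM_mul_comp_MYpairCM hk fun z => if z = (m, yk) then 1 else 0).symm
    _ = probEq (margProdCM k Y P n φ g) (MYpairCM k Y n φ) (m, yk) :=
        sum_congr rfl fun ys _ => by rw [mul_ite, mul_one, mul_zero]; congr 1

lemma QPaccCM_le_betaCM_mul_zpow (hP : ∀ y, 0 ≤ P y) (hk : 1 ≤ k) :
    QPaccCM k Y P n φ g
      ≤ betaCM k Y P n φ g * DeltaCM k Y P n φ g ^ (-((k : ℤ) + 1)) := by
  rw [QPaccCM_eq_probSet hk, ← Nat.cast_succ, zpow_neg, zpow_natCast, ← div_eq_mul_inv, betaCM,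
    ← probSet_div]
  exact probSet_le_probSet fun ys _ => margProdCM_le_iidQK_div hP ys

lemma QPaccCM_pos (hP : ∀ y, 0 ≤ P y) (hk : 1 ≤ k) (hΔ : 0 < DeltaCM k Y P n φ g) :
    0 < QPaccCM k Y P n φ g := by
  obtain ⟨ys, -, hys⟩ := exists_ne_zero_of_sum_ne_zero
    ((sum_ptildeCM (φ := φ) (g := g) hΔ).trans_ne one_ne_zero)
  have hpos := (ptildeCM_nonneg hP ys).lt_of_ne' hys
  rw [QPaccCM_eq_probSet hk]
  exact (margProdCM_pos_of_ptildeCM_pos hP hpos).trans_le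
    (le_probSet (margProdCM_nonneg hP) (mem_DsetCM_of_ptildeCM_pos hpos).1)

lemma neg_logb_QPaccCM_le_klJointCM (hP : ∀ y, 0 ≤ P y) (hk : 1 ≤ k)
    (hΔ : 0 < DeltaCM k Y P n φ g) :
    -Real.logb 2 (QPaccCM k Y P n φ g) ≤ klJointCM k Y P n φ g := by
  classical
  set pt := ptildeCM k Y P n φ g
  set MY := MYpairCM k Y n φ
  set q : ℕ × (Fin n → Y k) → ℝ :=
    fun z => QmsgCM k Y P n φ g z.1 * margSeqT k Y P n φ g (Fin.last k) z.2
  have hq : ∀ z, q z = probEq (margProdCM k Y P n φ g) MY z :=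
    fun z => QmsgCM_mul_margSeqT_eq_probEq hk z.1 z.2
  have hKL : klJointCM k Y P n φ g
      = ∑ z ∈ univ.image MY, probEq pt MY z * Real.logb 2 (probEq pt MY z / q z) :=
    sum_mul_comp_eq_sum_probEq pt MY fun z => Real.logb 2 (probEq pt MY z / q z)
  have hmass : ∑ z ∈ univ.image MY, probEq pt MY z = 1 := by
    have h := sum_mul_comp_eq_sum_probEq pt MY fun _ => 1
    simp only [mul_one] at h
    rw [← h]
    exact sum_ptildeCM hΔ
  have hsupp : MY ⁻¹' ↑((univ.image MY).filter fun z => 0 < probEq pt MY z)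
      ⊆ acceptSet k Y n φ g := by
    intro ys hys
    obtain ⟨ys', hys', hMY⟩ := exists_pos_of_probEq_pos (mem_filter.mp hys).2
    show g (MY ys).2 (MY ys).1 = false
    rw [← hMY]
    exact (mem_DsetCM_of_ptildeCM_pos hys').1
  rw [hKL]
  refine neg_logb_le_sum_mul_logb_div one_lt_two (fun z _ => probEq_nonneg
    (ptildeCM_nonneg hP) MY z) hmass (fun z _ hz => ?_) ?_
  · obtain ⟨ys, hys, rfl⟩ := exists_pos_of_probEq_pos hz
    rw [hq]
    exact (margProdCM_pos_of_ptildeCM_pos hP hys).trans_le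
      (le_probEq (margProdCM_nonneg hP) MY ys)
  · calc ∑ z ∈ univ.image MY with 0 < probEq pt MY z, q z
        = probSet (margProdCM k Y P n φ g)
            (MY ⁻¹' ↑((univ.image MY).filter fun z => 0 < probEq pt MY z)) := by
          simp only [hq, sum_probEq_eq_probSet_preimage]
      _ ≤ QPaccCM k Y P n φ g := by
          rw [QPaccCM_eq_probSet hk]
          exact probSet_mono (margProdCM_nonneg hP) hsupp

end KHopLemmas

lemma neg_logb_div_le_of_le_mul_zpow {Q β Δ D : ℝ} {k n : ℕ} (hQ : 0 < Q) (hΔ : 0 < Δ)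
    (hQβ : Q ≤ β * Δ ^ (-((k : ℤ) + 1))) (hD : -Real.logb 2 Q ≤ D) :
    -Real.logb 2 β / n ≤ D / n + (1 / (n : ℝ) - (((k : ℝ) + 1) / n) * Real.logb 2 Δ) := by
  have hpow : 0 < Δ ^ (k + 1) := pow_pos hΔ _
  rw [← Nat.cast_succ, zpow_neg, zpow_natCast, ← div_eq_mul_inv, le_div_iff₀ hpow] at hQβ
  have hlogβ : Real.logb 2 Q + ((k : ℝ) + 1) * Real.logb 2 Δ ≤ Real.logb 2 β := by
    have h := Real.logb_le_logb_of_le one_lt_two (mul_pos hQ hpow) hQβ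
    rwa [Real.logb_mul hQ.ne' hpow.ne', Real.logb_pow, Nat.cast_succ] at h
  calc -Real.logb 2 β / n ≤ (D - ((k : ℝ) + 1) * Real.logb 2 Δ) / n :=
        div_le_div_of_nonneg_right (by linarith) n.cast_nonneg
    _ ≤ _ := by
        have h1n : 0 ≤ 1 / (n : ℝ) := by positivity
        rw [sub_div, mul_div_right_comm]
        linarith

theorem khop_change_of_measure_type_II_bound_general
    (k : ℕ) (Y : ℕ → Type) [∀ i, Fintype (Y i)] [∀ i, Nonempty (Y i)]
    (hk : 1 ≤ k)
    (P : (∀ i : Fin (k + 1), Y i) → ℝ) (hP : IsPMF P)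
    (φ : ∀ n : ℕ, ∀ ℓ : ℕ, (Fin n → Y ℓ) → ℕ → ℕ)
    (g : ∀ n : ℕ, (Fin n → Y k) → ℕ → Bool) :
    ∀ n : ℕ, 0 < DeltaCM k Y P n (φ n) (g n) →
      QPaccCM k Y P n (φ n) (g n)
          ≤ betaCM k Y P n (φ n) (g n) * DeltaCM k Y P n (φ n) (g n) ^ (-((k : ℤ) + 1)) ∧
      (0 < betaCM k Y P n (φ n) (g n) →
        -(Real.logb 2 (betaCM k Y P n (φ n) (g n))) / n
          ≤ klJointCM k Y P n (φ n) (g n) / n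
            + (1 / (n : ℝ) - (((k : ℝ) + 1) / n) *
                Real.logb 2 (DeltaCM k Y P n (φ n) (g n)))) := by
  intro n hΔ
  have hQβ := QPaccCM_le_betaCM_mul_zpow (φ := φ n) (g := g n) hP.1 hk
  exact ⟨hQβ, fun _ => neg_logb_div_le_of_le_mul_zpow (QPaccCM_pos hP.1 hk hΔ) hΔ hQβ
    (neg_logb_QPaccCM_le_klJointCM hP.1 hk hΔ)⟩

/-- change-of-measure bound on the type-II error:
`(Q_{M̃_k} × P_{Ỹ_kⁿ})(A_k) ≤ β_{k,n} · Δ_k^{−(k+1)}`, and since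
`P_{M̃_k Ỹ_kⁿ}(A_k) = 1`, it follows that
`−(1/n)·log β_{k,n} ≤ (1/n)·D(P_{M̃_k Ỹ_kⁿ} ‖ Q_{M̃_k} × P_{Ỹ_kⁿ}) + δ_n'`, where
`δ_n' := 1/n − ((k+1)/n)·log Δ_k`. -/
theorem khop_change_of_measure_type_II_bound
    (k : ℕ) (Y : ℕ → Type) [∀ i, Fintype (Y i)] [∀ i, Nonempty (Y i)]
    (hk : 1 ≤ k)
    (P : (∀ i : Fin (k + 1), Y i) → ℝ) (hP : IsPMF P) (hMC : IsMarkovChainK k Y P)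
    (εk : ℝ) (hε0 : 0 ≤ εk) (hε1 : εk < 1)
    (φ : ∀ n : ℕ, ∀ ℓ : ℕ, (Fin n → Y ℓ) → ℕ → ℕ)
    (g : ∀ n : ℕ, (Fin n → Y k) → ℕ → Bool)
    (hα : limsup (fun n => alphaCM k Y P n (φ n) (g n)) atTop ≤ εk) :
    ∀ n : ℕ, 0 < DeltaCM k Y P n (φ n) (g n) →
      QPaccCM k Y P n (φ n) (g n)
          ≤ betaCM k Y P n (φ n) (g n) * DeltaCM k Y P n (φ n) (g n) ^ (-((k : ℤ) + 1)) ∧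
      (0 < betaCM k Y P n (φ n) (g n) →
        -(Real.logb 2 (betaCM k Y P n (φ n) (g n))) / n
          ≤ klJointCM k Y P n (φ n) (g n) / n
            + (1 / (n : ℝ) - (((k : ℝ) + 1) / n) *
                Real.logb 2 (DeltaCM k Y P n (φ n) (g n)))) :=
  khop_change_of_measure_type_II_bound_general k Y hk P hP φ g
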